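/- The integral ∫₀^{1/2} [π⁴/sin⁴(πz) − 1/z⁴ − (2π²/3)/z²] dz converges and equals (4/3)·(2 + π²). -/

import Mathlib

/-!
With `t = π z` the integrand is `π⁴ (csc⁴ t - t⁻⁴ - (2/3) t⁻²)`, and since
`(cot + cot³ / 3)' = -csc⁴`, the bracket has the explicit primitive
`P t = 1 / (3 t³) + 2 / (3 t) - cot t - cot³ t / 3`. Writing
`P t = (sin³ t (1 + 2 t²) - t³ cos t (1 + 2 sin² t)) / (3 t³ sin³ t)`, Taylor bounds of `sin` and
`cos` up to degree five squeeze the numerator between `0` and `t⁷`, so `P t → 0` as `t → 0⁺`.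
The same bounds show that the integrand is nonnegative, hence integrable as the derivative of a
function continuous on `[0, 1/2]`, and the integral is `π³ P (π / 2) = 8 / 3 + 4 π² / 3`.
-/

open MeasureTheory Real Filter Topology Set

lemma le_of_hasDerivAt_le {f g f' g' : ℝ → ℝ} {a x : ℝ} (hf : ∀ y, HasDerivAt f (f' y) y)
    (hg : ∀ y, HasDerivAt g (g' y) y) (ha : f a ≤ g a) (hderiv : ∀ y, a < y → f' y ≤ g' y)
    (hx : a ≤ x) : f x ≤ g x := by
  have hmono : MonotoneOn (g - f) (Ici a) := by
    refine monotoneOn_of_hasDerivWithinAt_nonneg (convex_Ici a)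
      (fun y _ => ((hg y).sub (hf y)).continuousAt.continuousWithinAt)
      (fun y _ => ((hg y).sub (hf y)).hasDerivWithinAt) fun y hy => ?_
    rw [interior_Ici] at hy
    exact sub_nonneg.2 (hderiv y hy)
  have := hmono self_mem_Ici hx hx
  simp only [Pi.sub_apply] at this
  linarith

lemma cos_le_taylor {x : ℝ} (hx : 0 ≤ x) : cos x ≤ 1 - x ^ 2 / 2 + x ^ 4 / 24 := by
  refine le_of_hasDerivAt_le (f := cos) (g := fun x => 1 - x ^ 2 / 2 + x ^ 4 / 24)
    (g' := fun x => -x + x ^ 3 / 6) hasDerivAt_cos (fun y => ?_) (by simp)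
    (fun y hy => by linarith [sin_ge_sub_cube hy.le]) hx
  refine ((((hasDerivAt_pow 2 y).div_const 2).const_sub 1).add
    ((hasDerivAt_pow 4 y).div_const 24)).congr_deriv ?_
  push_cast
  ring

lemma sin_le_taylor {x : ℝ} (hx : 0 ≤ x) : sin x ≤ x - x ^ 3 / 6 + x ^ 5 / 120 := by
  refine le_of_hasDerivAt_le (f := sin) (g := fun x => x - x ^ 3 / 6 + x ^ 5 / 120)
    (g' := fun x => 1 - x ^ 2 / 2 + x ^ 4 / 24) hasDerivAt_sin (fun y => ?_) (by simp)
    (fun y hy => cos_le_taylor hy.le) hx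
  refine (((hasDerivAt_id y).sub ((hasDerivAt_pow 3 y).div_const 6)).add
    ((hasDerivAt_pow 5 y).div_const 120)).congr_deriv ?_
  push_cast
  ring

lemma hasDerivAt_cot {x : ℝ} (hx : sin x ≠ 0) : HasDerivAt cot (-1 / sin x ^ 2) x := by
  rw [show cot = fun y => cos y / sin y from funext cot_eq_cos_div_sin]
  refine ((hasDerivAt_cos x).div (hasDerivAt_sin x) hx).congr_deriv ?_
  rw [← sin_sq_add_cos_sq x]
  ring

lemma three_add_two_sq_mul_sin_pow_four_le {t : ℝ} (h0 : 0 ≤ t) (h1 : t ≤ 8 / 5) :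
    (3 + 2 * t ^ 2) * sin t ^ 4 ≤ 3 * t ^ 4 := by
  set u := t ^ 2
  have hu0 : 0 ≤ u := by positivity
  have hu1 : u ≤ 64 / 25 := by nlinarith
  have hpoly : (3 + 2 * u) * (1 - u / 6 + u ^ 2 / 120) ^ 4 ≤ 3 := by
    nlinarith [mul_nonneg hu0 (sub_nonneg.2 hu1), pow_nonneg hu0 3, pow_nonneg hu0 4,
      pow_nonneg hu0 5, mul_nonneg (pow_nonneg hu0 2) (sub_nonneg.2 hu1),
      mul_nonneg (pow_nonneg hu0 4) (sub_nonneg.2 hu1),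
      mul_nonneg (pow_nonneg hu0 6) (sub_nonneg.2 hu1)]
  have hsin : sin t ≤ t * (1 - u / 6 + u ^ 2 / 120) := by
    convert sin_le_taylor h0 using 1
    ring
  calc (3 + 2 * u) * sin t ^ 4 ≤ (3 + 2 * u) * (t * (1 - u / 6 + u ^ 2 / 120)) ^ 4 := by
        gcongr
        exact sin_nonneg_of_nonneg_of_le_pi h0 (by linarith [pi_gt_three])
    _ = t ^ 4 * ((3 + 2 * u) * (1 - u / 6 + u ^ 2 / 120) ^ 4) := by ring
    _ ≤ t ^ 4 * 3 := by gcongr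
    _ = 3 * t ^ 4 := by ring

lemma sin_cube_mul_sub_mem_Icc {t : ℝ} (h0 : 0 ≤ t) (h1 : t ≤ 1) :
    sin t ^ 3 * (1 + 2 * t ^ 2) - t ^ 3 * cos t * (1 + 2 * sin t ^ 2) ∈ Icc 0 (t ^ 7) := by
  set u := t ^ 2
  have hu0 : 0 ≤ u := by positivity
  have hu1 : u ≤ 1 := by nlinarith
  have hsl : t * (1 - u / 6) ≤ sin t := by
    convert sin_ge_sub_cube h0 using 1
    ring
  have hsu : sin t ≤ t * (1 - u / 6 + u ^ 2 / 120) := by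
    convert sin_le_taylor h0 using 1
    ring
  have hcl : 1 - u / 2 ≤ cos t := one_sub_sq_div_two_le_cos
  have hcu : cos t ≤ 1 - u / 2 + u ^ 2 / 24 := by
    convert cos_le_taylor h0 using 1
    ring
  have hl0 : 0 ≤ t * (1 - u / 6) := mul_nonneg h0 (by linarith)
  have hc0 : 0 ≤ cos t := by linarith
  have hs0 : 0 ≤ sin t := hl0.trans hsl
  constructor
  · calc (0 : ℝ) ≤ t ^ 3 * ((1 + 2 * u) * (1 - u / 6) ^ 3
          - (1 - u / 2 + u ^ 2 / 24) * (1 + 2 * u * (1 - u / 6 + u ^ 2 / 120) ^ 2)) := by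
          refine mul_nonneg (by positivity) (sub_nonneg.2 ?_)
          nlinarith [pow_le_one₀ hu0 hu1 (n := 3), pow_le_one₀ hu0 hu1 (n := 5),
            pow_nonneg hu0 2, pow_nonneg hu0 4]
      _ = (t * (1 - u / 6)) ^ 3 * (1 + 2 * u)
          - t ^ 3 * (1 - u / 2 + u ^ 2 / 24) * (1 + 2 * (t * (1 - u / 6 + u ^ 2 / 120)) ^ 2) := by
          ring
      _ ≤ _ := by
          gcongr
          exact mul_nonneg (pow_nonneg h0 3) (by nlinarith)
  · calc _ ≤ (t * (1 - u / 6 + u ^ 2 / 120)) ^ 3 * (1 + 2 * u)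
          - t ^ 3 * (1 - u / 2) * (1 + 2 * (t * (1 - u / 6)) ^ 2) := by
          gcongr
      _ = t ^ 3 * ((1 + 2 * u) * (1 - u / 6 + u ^ 2 / 120) ^ 3
          - (1 - u / 2) * (1 + 2 * u * (1 - u / 6) ^ 2)) := by ring
      _ ≤ t ^ 3 * u ^ 2 := by
          gcongr
          nlinarith [pow_le_one₀ hu0 hu1 (n := 2), pow_le_one₀ hu0 hu1 (n := 3),
            pow_le_one₀ hu0 hu1 (n := 5), pow_nonneg hu0 4]
      _ = t ^ 7 := by ring

noncomputable def cscPowFourSub (t : ℝ) : ℝ := 1 / sin t ^ 4 - 1 / t ^ 4 - 2 / (3 * t ^ 2)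

noncomputable def cscPowFourSubPrimitive (t : ℝ) : ℝ :=
  1 / (3 * t ^ 3) + 2 / (3 * t) - cot t - cot t ^ 3 / 3

lemma hasDerivAt_cscPowFourSubPrimitive {t : ℝ} (ht : t ≠ 0) (hs : sin t ≠ 0) :
    HasDerivAt cscPowFourSubPrimitive (cscPowFourSub t) t := by
  have hcot := hasDerivAt_cot hs
  have h1 := (hasDerivAt_const t (1 : ℝ)).div ((hasDerivAt_pow 3 t).const_mul 3)
    (by positivity)
  have h2 := (hasDerivAt_const t (2 : ℝ)).div ((hasDerivAt_id t).const_mul 3)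
    (by simpa using ht)
  refine (((h1.add h2).sub hcot).sub ((hcot.pow 3).div_const 3)).congr_deriv ?_
  simp only [cscPowFourSub, cot_eq_cos_div_sin, id, Nat.cast_ofNat, Nat.reduceSub]
  field_simp
  linear_combination (3 * t ^ 4) * sin_sq_add_cos_sq t

lemma pow_four_mul_cscPowFourSub_mul {a z : ℝ} (ha : a ≠ 0) (hz : z ≠ 0) :
    a ^ 4 * cscPowFourSub (a * z) =
      a ^ 4 / sin (a * z) ^ 4 - 1 / z ^ 4 - 2 * a ^ 2 / 3 / z ^ 2 := by
  rw [cscPowFourSub]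
  field_simp

lemma hasDerivAt_cscPowFourSubPrimitive_mul {a z : ℝ} (ha : a ≠ 0) (hz : z ≠ 0)
    (hs : sin (a * z) ≠ 0) :
    HasDerivAt (fun z => a ^ 3 * cscPowFourSubPrimitive (a * z))
      (a ^ 4 / sin (a * z) ^ 4 - 1 / z ^ 4 - 2 * a ^ 2 / 3 / z ^ 2) z := by
  rw [← pow_four_mul_cscPowFourSub_mul ha hz]
  refine (((hasDerivAt_cscPowFourSubPrimitive (mul_ne_zero ha hz) hs).comp z
    ((hasDerivAt_id z).const_mul a)).const_mul (a ^ 3)).congr_deriv ?_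
  simp only [mul_one]
  ring

lemma cscPowFourSub_nonneg {t : ℝ} (h0 : 0 < t) (h1 : t ≤ π / 2) : 0 ≤ cscPowFourSub t := by
  have hs : 0 < sin t := sin_pos_of_pos_of_lt_pi h0 (by linarith [pi_pos])
  have hbound := three_add_two_sq_mul_sin_pow_four_le h0.le (by linarith [pi_lt_d2])
  have hform : cscPowFourSub t =
      (3 * t ^ 4 - (3 + 2 * t ^ 2) * sin t ^ 4) / (3 * t ^ 4 * sin t ^ 4) := by
    rw [cscPowFourSub]
    field_simp
    ring
  rw [hform]
  exact div_nonneg (by linarith) (by positivity)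

lemma cscPowFourSubPrimitive_eq {t : ℝ} (ht : t ≠ 0) (hs : sin t ≠ 0) :
    cscPowFourSubPrimitive t = (sin t ^ 3 * (1 + 2 * t ^ 2) - t ^ 3 * cos t * (1 + 2 * sin t ^ 2))
      / (3 * t ^ 3 * sin t ^ 3) := by
  rw [cscPowFourSubPrimitive, cot_eq_cos_div_sin]
  field_simp
  linear_combination (-t ^ 3 * cos t) * sin_sq_add_cos_sq t

lemma cscPowFourSubPrimitive_mem_Icc {t : ℝ} (h0 : 0 < t) (h1 : t ≤ 1) :
    cscPowFourSubPrimitive t ∈ Icc 0 (8 * t / 3) := by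
  have hs : t / 2 ≤ sin t := by
    linarith [sin_ge_sub_cube h0.le, pow_le_of_le_one h0.le h1 (show 3 ≠ 0 by norm_num)]
  obtain ⟨hN0, hN1⟩ := sin_cube_mul_sub_mem_Icc h0.le h1
  have hden : 0 < 3 * t ^ 3 * sin t ^ 3 := by
    have : 0 < sin t := by linarith
    positivity
  rw [cscPowFourSubPrimitive_eq h0.ne' (by linarith), mem_Icc, div_le_iff₀ hden]
  refine ⟨div_nonneg hN0 hden.le, hN1.trans ?_⟩
  calc t ^ 7 = 8 * t / 3 * (3 * t ^ 3 * (t / 2) ^ 3) := by ring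
    _ ≤ 8 * t / 3 * (3 * t ^ 3 * sin t ^ 3) := by gcongr

/-- This is a junk value (`1 / 0 = 0` and `cot 0 = cos 0 / sin 0 = 0`), but it is also the limit
from the right, which makes the primitive continuous on `[0, π)`. -/
lemma cscPowFourSubPrimitive_zero : cscPowFourSubPrimitive 0 = 0 := by
  simp [cscPowFourSubPrimitive, cot_eq_cos_div_sin]

lemma continuousWithinAt_cscPowFourSubPrimitive_zero :
    ContinuousWithinAt cscPowFourSubPrimitive (Ici 0) 0 := by
  rw [← continuousWithinAt_Ioi_iff_Ici, ContinuousWithinAt, cscPowFourSubPrimitive_zero]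
  have hlin : Tendsto (fun t : ℝ => 8 * t / 3) (𝓝[>] 0) (𝓝 0) := by
    refine tendsto_nhdsWithin_of_tendsto_nhds ?_
    simpa using ((continuous_const_mul (8 : ℝ)).div_const 3).tendsto 0
  have hbound : ∀ᶠ t in 𝓝[>] 0, cscPowFourSubPrimitive t ∈ Icc 0 (8 * t / 3) := by
    filter_upwards [Ioo_mem_nhdsGT (show (0 : ℝ) < 1 by norm_num)] with t ht
    exact cscPowFourSubPrimitive_mem_Icc ht.1 ht.2.le
  exact tendsto_of_tendsto_of_tendsto_of_le_of_le' tendsto_const_nhds hlin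
    (hbound.mono fun _ h => h.1) (hbound.mono fun _ h => h.2)

lemma cscPowFourSubPrimitive_pi_div_two :
    cscPowFourSubPrimitive (π / 2) = 8 / (3 * π ^ 3) + 4 / (3 * π) := by
  simp [cscPowFourSubPrimitive, cot_eq_cos_div_sin]
  field_simp
  ring

theorem integral_sin_pow_four_subtracted :
    IntegrableOn
      (fun z : ℝ => Real.pi ^ 4 / Real.sin (Real.pi * z) ^ 4 - 1 / z ^ 4
        - (2 * Real.pi ^ 2 / 3) / z ^ 2) (Set.Ioo 0 (1/2)) ∧
    ∫ z in Set.Ioo (0:ℝ) (1/2),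
        (Real.pi ^ 4 / Real.sin (Real.pi * z) ^ 4 - 1 / z ^ 4
          - (2 * Real.pi ^ 2 / 3) / z ^ 2)
      = (4 / 3) * (2 + Real.pi ^ 2) := by
  set F : ℝ → ℝ := fun z => π ^ 3 * cscPowFourSubPrimitive (π * z)
  have hderiv : ∀ z ∈ Ioc (0 : ℝ) (1 / 2), HasDerivAt F
      (π ^ 4 / sin (π * z) ^ 4 - 1 / z ^ 4 - (2 * π ^ 2 / 3) / z ^ 2) z := fun z hz =>
    hasDerivAt_cscPowFourSubPrimitive_mul pi_ne_zero hz.1.ne'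
      (sin_pos_of_pos_of_lt_pi (mul_pos pi_pos hz.1) (by nlinarith [pi_pos, hz.2])).ne'
  have hcont : ContinuousOn F (Icc 0 (1 / 2)) := by
    intro z ⟨hz0, hz1⟩
    rcases hz0.eq_or_lt with rfl | hz0
    · have hmaps : MapsTo (π * ·) (Icc 0 (1 / 2)) (Ici 0) := fun z hz => mul_nonneg pi_pos.le hz.1
      exact continuousWithinAt_const.mul (continuousWithinAt_cscPowFourSubPrimitive_zero.comp_of_eq
        (continuous_const_mul π).continuousWithinAt hmaps (mul_zero π))
    · exact (hderiv z ⟨hz0, hz1⟩).continuousAt.continuousWithinAt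
  have hderiv' z (hz : z ∈ Ioo (0 : ℝ) (1 / 2)) := hderiv z (Ioo_subset_Ioc_self hz)
  have hint := intervalIntegral.integrableOn_deriv_of_nonneg hcont hderiv' fun z hz => by
    rw [← pow_four_mul_cscPowFourSub_mul pi_ne_zero hz.1.ne']
    exact mul_nonneg (by positivity)
      (cscPowFourSub_nonneg (mul_pos pi_pos hz.1) (by nlinarith [hz.2, pi_pos]))
  refine ⟨hint.mono_set Ioo_subset_Ioc_self, ?_⟩
  rw [← integral_Ioc_eq_integral_Ioo, ← intervalIntegral.integral_of_le (by norm_num),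
    intervalIntegral.integral_eq_sub_of_hasDerivAt_of_le (by norm_num) hcont hderiv'
      ((intervalIntegrable_iff_integrableOn_Ioc_of_le (by norm_num)).2 hint)]
  simp only [F, mul_zero, mul_one_div, cscPowFourSubPrimitive_pi_div_two,
    cscPowFourSubPrimitive_zero]
  field_simp
  ring
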